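/- Let q be a power of a prime p, let L be a field that is an F_q-algebra carrying a multiplicative nonarchimedean absolute value |·| : L → ℝ, let n ≥ 1 and i ≥ 1 be integers, and let γ_1, …, γ_{i−1}, β ∈ L with |β| > 1 and |γ_j| < |β| for every j = 1, …, i−1. Then |∑_{(c_0, c_1, …, c_{i−1}) ∈ F_q^i} (c_0 + c_1γ_1 + ⋯ + c_{i−1}γ_{i−1} + β)^{1 − q^n}| ≤ |β|^{q^n (1 − q)}. -/

import Mathlib

/-!
Fix `c₁, …, c_k` and put `y = c₁γ₁ + ⋯ + c_kγ_k + β`; then `|y| = |β| > 1`.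
With `Q = q^n`, Frobenius gives `(c₀ + y)^Q = c₀ + y^Q`, so
`(c₀ + y)^(1-Q) = 1 + (y - y^Q)/(c₀ + y^Q)`. Summing over `c₀ ∈ F_q`, the `q` constant terms
vanish and `∑_c 1/(z - c) = -1/(z^q - z)` is the logarithmic derivative of
`X^q - X = ∏_c (X - c)`. The inner sum is therefore
`(y^Q - y)/(y^(Qq) - y^Q)`, of absolute value at most `|β|^Q / |β|^(Qq)`, and the ultrametric
inequality bounds the full sum by the same quantity.
-/

open Polynomial Finset

section Nonarchimedean

variable {R : Type*} [Semiring R] {v : AbsoluteValue R ℝ}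

lemma IsNonarchimedean.apply_sum_le_of_forall_le (hv : IsNonarchimedean v) {ι : Type*}
    {s : Finset ι} {f : ι → R} {B : ℝ} (hB : 0 ≤ B) (h : ∀ i ∈ s, v (f i) ≤ B) :
    v (∑ i ∈ s, f i) ≤ B := by
  rcases s.eq_empty_or_nonempty with rfl | hs
  · simpa using hB
  · exact (hv.apply_sum_le_sup hs).trans (Finset.sup'_le hs _ h)

lemma IsNonarchimedean.apply_sum_lt_of_forall_lt (hv : IsNonarchimedean v) {ι : Type*}
    {s : Finset ι} {f : ι → R} {B : ℝ} (hB : 0 < B) (h : ∀ i ∈ s, v (f i) < B) :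
    v (∑ i ∈ s, f i) < B := by
  rcases s.eq_empty_or_nonempty with rfl | hs
  · simpa using hB
  · exact (hv.apply_sum_le_sup hs).trans_lt ((Finset.sup'_lt_iff hs).2 h)

end Nonarchimedean

lemma AbsoluteValue.apply_algebraMap_le_one {K L : Type*} [Field K] [Fintype K] [Semiring L]
    [Nontrivial L] [Algebra K L] (v : AbsoluteValue L ℝ) (c : K) :
    v (algebraMap K L c) ≤ 1 := by
  rcases eq_or_ne c 0 with rfl | hc
  · simp
  have hpow : v (algebraMap K L c) ^ (Fintype.card K - 1) = 1 := by
    rw [← v.map_pow, ← map_pow, FiniteField.pow_card_sub_one_eq_one c hc, map_one, v.map_one]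
  rw [pow_eq_one_iff_of_nonneg (v.nonneg _) (by have := Fintype.one_lt_card (α := K); omega)]
    at hpow
  exact hpow.le

lemma Polynomial.sum_inv_sub_eq_eval_derivative_div_eval {L ι : Type*} [Field L] (s : Finset ι)
    (a : ι → L) {z : L} (hz : ∀ i ∈ s, z ≠ a i) :
    ∑ i ∈ s, (z - a i)⁻¹ =
      (derivative (∏ i ∈ s, (X - C (a i)))).eval z / (∏ i ∈ s, (X - C (a i))).eval z := by
  classical
  have hne : ∏ i ∈ s, (z - a i) ≠ 0 := prod_ne_zero_iff.2 fun i hi => sub_ne_zero.2 (hz i hi)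
  simp only [derivative_prod_finset, derivative_X_sub_C, mul_one, eval_finsetSum, eval_prod,
    eval_sub, eval_X, eval_C, sum_div]
  refine sum_congr rfl fun i hi => ?_
  rw [eq_div_iff hne, ← mul_prod_erase s _ hi, ← mul_assoc,
    inv_mul_cancel₀ (sub_ne_zero.2 (hz i hi)), one_mul]

namespace FiniteField

variable {K : Type*} [Field K] [Fintype K]

local notation "q" => Fintype.card K

theorem prod_X_sub_C_eq_X_pow_card_sub_X :
    ∏ c : K, (X - C c) = X ^ q - X := by
  have hq := Fintype.one_lt_card (α := K)
  have hmonic : (X ^ q - X : K[X]).Monic :=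
    monic_X_pow_sub (degree_X_le.trans_lt (by exact_mod_cast hq))
  have h := prod_multiset_X_sub_C_of_monic_of_roots_card_eq hmonic
    (by rw [roots_X_pow_card_sub_X, X_pow_card_sub_X_natDegree_eq K hq]; simp)
  rwa [roots_X_pow_card_sub_X, ← prod_eq_multiset_prod] at h

variable {L : Type*} [Field L] [Algebra K L]

theorem sum_inv_sub_algebraMap {z : L} (hz : ∀ c : K, z ≠ algebraMap K L c) :
    ∑ c : K, (z - algebraMap K L c)⁻¹ = -(z ^ q - z)⁻¹ := by
  have hprod : ∏ c : K, (X - C (algebraMap K L c)) = X ^ q - X := by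
    simpa [Polynomial.map_prod] using
      congrArg (Polynomial.map (algebraMap K L)) (prod_X_sub_C_eq_X_pow_card_sub_X (K := K))
  have hcard : (q : L) = 0 := by
    rw [← map_natCast (algebraMap K L), cast_card_eq_zero, map_zero]
  rw [sum_inv_sub_eq_eval_derivative_div_eval _ _ fun c _ => hz c, hprod]
  simp [derivative_X_pow, hcard, neg_div]

theorem algebraMap_add_pow_card_pow (c : K) (y : L) (n : ℕ) :
    (algebraMap K L c + y) ^ q ^ n = algebraMap K L c + y ^ q ^ n := by
  induction n with
  | zero => simp
  | succ n ih =>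
    calc (algebraMap K L c + y) ^ q ^ (n + 1)
        = frobeniusAlgHom K L (algebraMap K L c + y ^ q ^ n) := by
          rw [pow_succ, pow_mul, ih]; rfl
      _ = algebraMap K L c + (y ^ q ^ n) ^ q := by
          rw [map_add, AlgHom.commutes]; rfl
      _ = algebraMap K L c + y ^ q ^ (n + 1) := by rw [← pow_mul, ← pow_succ]

theorem sum_algebraMap_add_zpow_one_sub_card_pow (y : L) (n : ℕ)
    (hy : ∀ c : K, y ^ q ^ n ≠ algebraMap K L c) :
    ∑ c : K, (algebraMap K L c + y) ^ (1 - (q : ℤ) ^ n) =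
      (y ^ q ^ n - y) / ((y ^ q ^ n) ^ q - y ^ q ^ n) := by
  set z := y ^ q ^ n
  have hterm (c : K) :
      (algebraMap K L c + y) ^ (1 - (q : ℤ) ^ n) =
        1 + (y - z) * (z - algebraMap K L (-c))⁻¹ := by
    have hfrob : (algebraMap K L c + y) ^ q ^ n = algebraMap K L c + z :=
      algebraMap_add_pow_card_pow c y n
    have hz : algebraMap K L c + z ≠ 0 := by
      simpa [sub_eq_add_neg, add_comm] using sub_ne_zero.2 (hy (-c))
    have hx : algebraMap K L c + y ≠ 0 := ne_zero_pow (by positivity) (hfrob ▸ hz)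
    rw [zpow_sub₀ hx, zpow_one, ← Nat.cast_pow, zpow_natCast, hfrob, map_neg, sub_neg_eq_add,
      add_comm z]
    field_simp
    ring
  have hcard : (q : L) = 0 := by
    rw [← map_natCast (algebraMap K L), cast_card_eq_zero, map_zero]
  have hneg : ∑ c : K, (z - algebraMap K L (-c))⁻¹ = ∑ c : K, (z - algebraMap K L c)⁻¹ :=
    Fintype.sum_equiv (Equiv.neg K) _ _ fun _ => rfl
  rw [sum_congr rfl fun c _ => hterm c, sum_add_distrib, ← mul_sum, hneg,
    sum_inv_sub_algebraMap hy, sum_const, card_univ, nsmul_one, hcard, zero_add, div_eq_mul_inv]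
  ring

end FiniteField

lemma IsNonarchimedean.apply_pow_sub_div_le {L : Type*} [Field L] {v : AbsoluteValue L ℝ}
    (hv : IsNonarchimedean v) {y : L} (hy : 1 < v y) {Q q : ℕ} (hQ : 1 ≤ Q) (hq : 1 < q) :
    v ((y ^ Q - y) / ((y ^ Q) ^ q - y ^ Q)) ≤ v y ^ ((Q : ℤ) * (1 - q)) := by
  have hnum : v (y ^ Q - y) ≤ v y ^ Q := by
    rw [sub_eq_add_neg]
    refine (hv _ _).trans (max_le ?_ ?_)
    · rw [v.map_pow]
    · rw [v.map_neg]; exact le_self_pow₀ hy.le (by omega)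
  have hden : v ((y ^ Q) ^ q - y ^ Q) = v y ^ (Q * q) := by
    have hlt : v (-y ^ Q) < v ((y ^ Q) ^ q) := by
      simp only [v.map_neg, v.map_pow, ← pow_mul]
      exact pow_lt_pow_right₀ hy (lt_mul_of_one_lt_right (by omega) hq)
    rw [sub_eq_add_neg, hv.add_eq_left_of_lt hlt, v.map_pow, v.map_pow, ← pow_mul]
  have hexp : (Q : ℤ) * (1 - q) = (Q : ℤ) - ((Q * q : ℕ) : ℤ) := by push_cast; ring
  rw [map_div₀, hden, hexp, zpow_sub₀ (by positivity), zpow_natCast, zpow_natCast]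
  exact div_le_div_of_nonneg_right hnum (by positivity)

theorem stmt2_general (Fq L : Type*) [Field Fq] [Fintype Fq] [Field L] [Algebra Fq L]
    (q : ℕ) (hq : q = Fintype.card Fq)
    (v : AbsoluteValue L ℝ) (hv : IsNonarchimedean v)
    (n : ℕ) (k : ℕ)
    (γ : Fin k → L) (β : L) (hβ : 1 < v β)
    (hγ : ∀ j : Fin k, v (γ j) < v β) :
    v (∑ c : Fq × (Fin k → Fq),
        (algebraMap Fq L c.1 + ∑ j : Fin k, algebraMap Fq L (c.2 j) * γ j + β)
          ^ (1 - (q : ℤ) ^ n)) ≤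
      v β ^ ((q : ℤ) ^ n * (1 - (q : ℤ))) := by
  subst hq
  have hq1 : 1 < Fintype.card Fq := Fintype.one_lt_card
  rw [Fintype.sum_prod_type_right]
  refine hv.apply_sum_le_of_forall_le (zpow_nonneg (v.nonneg β) _) fun c _ => ?_
  set y := ∑ j, algebraMap Fq L (c j) * γ j + β
  have hvy : v y = v β := by
    refine hv.add_eq_right_of_lt (hv.apply_sum_lt_of_forall_lt (by linarith) fun j _ => ?_)
    rw [v.map_mul]
    exact (mul_le_of_le_one_left (v.nonneg _) (v.apply_algebraMap_le_one _)).trans_lt (hγ j)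
  have hyQ (c₀ : Fq) : y ^ Fintype.card Fq ^ n ≠ algebraMap Fq L c₀ := fun h => by
    have := congrArg v h
    rw [v.map_pow, hvy] at this
    exact (one_lt_pow₀ hβ (by positivity)).not_ge (this ▸ v.apply_algebraMap_le_one c₀)
  simp only [add_assoc]
  rw [FiniteField.sum_algebraMap_add_zpow_one_sub_card_pow y n hyQ, ← hvy]
  convert hv.apply_pow_sub_div_le (hvy ▸ hβ) (Nat.one_le_pow n _ (zero_lt_one.trans hq1)) hq1
    using 2
  push_cast
  ring

/-- **Lemma 5.3(2).**  Let `q` be a power of a prime (realized as the cardinality of a finite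
field `Fq`), `L` a field which is an `Fq`-algebra equipped with a multiplicative nonarchimedean
absolute value `v`, `n ≥ 1`, and `i = k + 1 ≥ 1`.  Let `γ_1, …, γ_k ∈ L` (here `γ : Fin k → L`)
and `β ∈ L` with `|β| > 1` and `|γ_j| < |β|` for all `j`.  Then
`|∑_{(c₀,c₁,…,c_k) ∈ Fq^{k+1}} (c₀ + c₁γ₁ + ⋯ + c_kγ_k + β)^{1 - q^n}| ≤ |β|^{q^n (1 - q)}`. -/
theorem stmt2 (Fq L : Type*) [Field Fq] [Fintype Fq] [Field L] [Algebra Fq L]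
    (q : ℕ) (hq : q = Fintype.card Fq)
    (v : AbsoluteValue L ℝ) (hv : IsNonarchimedean v)
    (n : ℕ) (hn : 1 ≤ n) (k : ℕ)
    (γ : Fin k → L) (β : L) (hβ : 1 < v β)
    (hγ : ∀ j : Fin k, v (γ j) < v β) :
    v (∑ c : Fq × (Fin k → Fq),
        (algebraMap Fq L c.1 + ∑ j : Fin k, algebraMap Fq L (c.2 j) * γ j + β)
          ^ (1 - (q : ℤ) ^ n)) ≤
      v β ^ ((q : ℤ) ^ n * (1 - (q : ℤ))) :=
  stmt2_general Fq L q hq v hv n k γ β hβ hγ
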